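/- In G = ℤ² ⋊ ℤ/2ℤ (swap action) with a = ((1,0),0), t = ((0,0),1), if x₁ > 0 > x₂ then the word a^{x₁} t a^{y} t a^{x₂} is not geodesic: the word a^{x₁+x₂} t a^{y} t represents the same element and is strictly shorter. -/

import Mathlib

/-- The coordinate-swapping automorphism of ℤ². -/
def swapAut : MulAut (Multiplicative (ℤ × ℤ)) :=
  AddEquiv.toMultiplicative (AddEquiv.prodComm : (ℤ × ℤ) ≃+ (ℤ × ℤ))

lemma swapAut_sq : swapAut ^ 2 = 1 := by
  ext z : 1
  show swapAut (swapAut z) = z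
  cases z
  rfl

/-- The action of ℤ/2ℤ on ℤ² by swapping the two coordinates. -/
def swapAction : Multiplicative (ZMod 2) →* MulAut (Multiplicative (ℤ × ℤ)) where
  toFun ε := swapAut ^ (Multiplicative.toAdd ε).val
  map_one' := rfl
  map_mul' x y := by
    show swapAut ^ _ = swapAut ^ _ * swapAut ^ _
    rw [← pow_add]
    have key : ∀ m n : ℕ, m % 2 = n % 2 → swapAut ^ m = swapAut ^ n := by
      intro m n h
      rw [← Nat.div_add_mod m 2, ← Nat.div_add_mod n 2, h, pow_add, pow_add,
        pow_mul, pow_mul, swapAut_sq]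
      simp
    apply key
    have := ZMod.val_add (Multiplicative.toAdd x) (Multiplicative.toAdd y)
    simp only [toAdd_mul] at *
    omega

/-- The group G = ℤ² ⋊ ℤ/2ℤ with the swap action. -/
abbrev GG := SemidirectProduct (Multiplicative (ℤ × ℤ)) (Multiplicative (ZMod 2)) swapAction

/-- The generator a = ((1,0), 0). -/
def ga : GG := SemidirectProduct.inl (Multiplicative.ofAdd ((1, 0) : ℤ × ℤ))

/-- The generator t = ((0,0), 1). -/
def gt : GG := SemidirectProduct.inr (Multiplicative.ofAdd (1 : ZMod 2))

/-- The element ((x,y), ε) of G. -/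
def el (x y : ℤ) (ε : ZMod 2) : GG :=
  ⟨Multiplicative.ofAdd (x, y), Multiplicative.ofAdd ε⟩

/-- The generating set A = {a, a⁻¹, t, t⁻¹}. -/
def GenSet : Set GG := {ga, ga⁻¹, gt, gt⁻¹}

/-- `w` is a word over the alphabet A. -/
def IsWord (w : List GG) : Prop := ∀ x ∈ w, x ∈ GenSet

/-- `w` is a word over A representing the group element `g` (via its product). -/
def Represents (w : List GG) (g : GG) : Prop := IsWord w ∧ w.prod = g

/-- The word length of `g`: minimal length of a word over A representing `g`. -/
noncomputable def wordLength (g : GG) : ℕ :=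
  sInf {n | ∃ w : List GG, Represents w g ∧ w.length = n}

/-- A word over A is geodesic if no strictly shorter word over A represents
the same element. -/
def IsGeodesic (w : List GG) : Prop :=
  IsWord w ∧ ∀ v : List GG, IsWord v → v.prod = w.prod → w.length ≤ v.length

open Classical in
/-- The number of t-letters of a word (occurrences of t and t⁻¹). -/
noncomputable def tCount (w : List GG) : ℕ :=
  w.countP (fun x => decide (x = gt ∨ x = gt⁻¹))

/-- The word aˣ over A: x letters `a` if x ≥ 0, |x| letters `a⁻¹` if x < 0. -/
def apow (x : ℤ) : List GG :=
  if 0 ≤ x then List.replicate x.toNat ga else List.replicate (-x).toNat ga⁻¹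

/-- The word metric on G with respect to A. -/
noncomputable def dA (g h : GG) : ℕ := wordLength (g⁻¹ * h)

/-- The point of G reached at time i along the word w (the endpoint if i
exceeds the length of w). -/
def pt (w : List GG) (i : ℕ) : GG := (w.take i).prod

/-- Words u and w synchronously k-fellow travel. -/
def FellowTravels (k : ℕ) (u w : List GG) : Prop :=
  ∀ i : ℕ, dA (pt u i) (pt w i) ≤ k

/-
Conjugation by the involution `t` is the swap on ℤ², so `t aʸ t` lies in the abelian subgroup ℤ²
and commutes with `a^{x₂}`; moving `a^{x₂}` to the front merges it with
`a^{x₁}`. When `x₁` and `x₂` have opposite signs the merged block is shorter: `|x₁ + x₂| < x₁ + |x₂|`.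
-/

lemma swapAction_ofAdd_one (z : Multiplicative (ℤ × ℤ)) :
    swapAction (Multiplicative.ofAdd 1) z = swapAut z :=
  rfl

lemma gt_mul_inl_mul_gt (z : Multiplicative (ℤ × ℤ)) :
    gt * SemidirectProduct.inl z * gt = SemidirectProduct.inl (swapAut z) := by
  ext <;> simp [gt, swapAction_ofAdd_one]
  decide

lemma commute_gt_mul_zpow_mul_gt (x y : ℤ) : Commute (gt * ga ^ y * gt) (ga ^ x) := by
  rw [ga, ← map_zpow SemidirectProduct.inl, ← map_zpow SemidirectProduct.inl, gt_mul_inl_mul_gt]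
  exact (Commute.all _ _).map SemidirectProduct.inl

lemma zpow_add_mul_gt_mul_zpow_mul_gt (x₁ x₂ y : ℤ) :
    ga ^ (x₁ + x₂) * gt * ga ^ y * gt = ga ^ x₁ * gt * ga ^ y * gt * ga ^ x₂ := by
  calc ga ^ (x₁ + x₂) * gt * ga ^ y * gt = ga ^ x₁ * (ga ^ x₂ * (gt * ga ^ y * gt)) := by
        simp only [zpow_add, mul_assoc]
    _ = ga ^ x₁ * gt * ga ^ y * gt * ga ^ x₂ := by
        rw [← (commute_gt_mul_zpow_mul_gt x₂ y).eq]
        simp only [mul_assoc]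

lemma prod_apow (x : ℤ) : (apow x).prod = ga ^ x := by
  unfold apow
  split
  · rw [List.prod_replicate, ← zpow_natCast]
    congr 1; omega
  · rw [List.prod_replicate, inv_pow, ← zpow_natCast, ← zpow_neg]
    congr 1; omega

lemma length_apow (x : ℤ) : (apow x).length = x.natAbs := by
  unfold apow
  split <;> simp <;> omega

lemma isWord_append_iff {u v : List GG} : IsWord (u ++ v) ↔ IsWord u ∧ IsWord v :=
  List.forall_mem_append

lemma isWord_gt : IsWord [gt] := by
  simp [IsWord, GenSet]

lemma isWord_apow (x : ℤ) : IsWord (apow x) := by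
  intro g hg
  unfold apow at hg
  split at hg <;> simp only [List.mem_replicate] at hg <;> simp [GenSet, hg.2]

lemma not_isGeodesic_of_shorter {v w : List GG} (hv : IsWord v) (hprod : v.prod = w.prod)
    (hlen : v.length < w.length) : ¬ IsGeodesic w :=
  fun hw => (hw.2 v hv hprod).not_gt hlen

/-- If x₁ > 0 > x₂ then a^{x₁} t a^y t a^{x₂} is not geodesic: the strictly
shorter word a^{x₁+x₂} t a^y t represents the same element. -/
theorem opposite_signs_not_geodesic (x₁ x₂ y : ℤ) (h₁ : 0 < x₁) (h₂ : x₂ < 0) :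
    (apow (x₁ + x₂) ++ [gt] ++ apow y ++ [gt]).prod
      = (apow x₁ ++ [gt] ++ apow y ++ [gt] ++ apow x₂).prod ∧
    (apow (x₁ + x₂) ++ [gt] ++ apow y ++ [gt]).length
      < (apow x₁ ++ [gt] ++ apow y ++ [gt] ++ apow x₂).length ∧
    ¬ IsGeodesic (apow x₁ ++ [gt] ++ apow y ++ [gt] ++ apow x₂) := by
  have hprod : (apow (x₁ + x₂) ++ [gt] ++ apow y ++ [gt]).prod
      = (apow x₁ ++ [gt] ++ apow y ++ [gt] ++ apow x₂).prod := by
    simp only [List.prod_append, List.prod_singleton, prod_apow]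
    exact zpow_add_mul_gt_mul_zpow_mul_gt x₁ x₂ y
  have hlen : (apow (x₁ + x₂) ++ [gt] ++ apow y ++ [gt]).length
      < (apow x₁ ++ [gt] ++ apow y ++ [gt] ++ apow x₂).length := by
    simp only [List.length_append, List.length_singleton, length_apow]
    omega
  have hword : IsWord (apow (x₁ + x₂) ++ [gt] ++ apow y ++ [gt]) := by
    simp only [isWord_append_iff, isWord_apow, isWord_gt, and_self]
  exact ⟨hprod, hlen, not_isGeodesic_of_shorter hword hprod hlen⟩
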